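/- arXiv:1511.05071 — 6 statements merged into one kernel-verified Lean document; each statement's English description precedes it below -/
import Mathlib

section
/- Let V and W be finite-dimensional vector spaces over a field K, let B : V → W be a linear map of rank r, and define ad^r B : W → Hom(Λ^r V, Λ^{r+1} W) by (ad^r B)(ω)(η₁ ∧ … ∧ η_r) = ω ∧ Bη₁ ∧ … ∧ Bη_r. Then the image of B equals the kernel of ad^r B. -/
/-! A wedge of vectors vanishes exactly when they are linearly dependent. If `ω = B x`, then `ω`
together with `r` vectors of the `r`-dimensional space `im B` are `r + 1` vectors in it, hence
dependent. If `ω ∉ im B`, choosing the `B ηᵢ` to be a basis of `im B` makes `ω, B η₁, …, B η_r`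
independent, so their wedge is nonzero. -/

open ExteriorAlgebra

theorem ExteriorAlgebra.ι_mul_ιMulti {R M : Type*} [CommRing R] [AddCommGroup M] [Module R M]
    {n : ℕ} (m : M) (v : Fin n → M) :
    ι R m * ιMulti R n v = ιMulti R (n + 1) (Fin.cons m v) := by
  rw [ιMulti_succ_apply, Fin.cons_zero]; rfl

theorem ExteriorAlgebra.ιMulti_ne_zero_of_linearIndependent {K E : Type*} [Field K]
    [AddCommGroup E] [Module K E] {n : ℕ} {v : Fin n → E} (hv : LinearIndependent K v) :
    ιMulti K n v ≠ 0 := by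
  have := (exteriorPower.ιMulti_family_linearIndependent_field (n := n) hv).ne_zero
    (Set.powersetCard.ofFinEmbEquiv (RelEmbedding.refl (· ≤ ·)))
  rw [exteriorPower.ιMulti_family, Equiv.symm_apply_apply] at this
  exact fun h => this (Subtype.ext h)

theorem ExteriorAlgebra.ιMulti_eq_zero_of_finrank_lt {K E : Type*} [Field K]
    [AddCommGroup E] [Module K E] {U : Submodule K E} [FiniteDimensional K U] {n : ℕ}
    (hn : Module.finrank K U < n) {v : Fin n → E} (hv : ∀ i, v i ∈ U) :
    ιMulti K n v = 0 := by
  refine AlternatingMap.map_linearDependent _ _ fun hli => hn.not_ge ?_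
  calc n = Module.finrank K (Submodule.span K (Set.range v)) := by
        rw [finrank_span_eq_card hli, Fintype.card_fin]
    _ ≤ Module.finrank K U :=
        Submodule.finrank_mono (Submodule.span_le.mpr (Set.range_subset_iff.mpr hv))

theorem Submodule.exists_linearIndependent_cons_of_notMem {K E : Type*} [Field K]
    [AddCommGroup E] [Module K E] {U : Submodule K E} [FiniteDimensional K U] {x : E}
    (hx : x ∉ U) : ∃ u : Fin (Module.finrank K U) → E,
      (∀ i, u i ∈ U) ∧ LinearIndependent K (Fin.cons x u : Fin _ → E) := by
  let b := Module.finBasis K U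
  refine ⟨U.subtype ∘ b, fun i => (b i).2, linearIndependent_finCons.mpr ⟨?_, ?_⟩⟩
  · exact b.linearIndependent.map' U.subtype U.ker_subtype
  · rwa [Set.range_comp, Submodule.span_image, b.span_eq, Submodule.map_subtype_top]

theorem statement0_general {K V W : Type*} [Field K]
    [AddCommGroup V] [Module K V]
    [AddCommGroup W] [Module K W] [FiniteDimensional K W]
    (B : V →ₗ[K] W) (r : ℕ) (hr : r = Module.finrank K (LinearMap.range B)) :
    (LinearMap.range B : Set W) =
      {ω : W | ∀ η : Fin r → V,
        ExteriorAlgebra.ι K ω *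
          (List.ofFn fun i => ExteriorAlgebra.ι K (B (η i))).prod = 0} := by
  subst hr
  ext ω
  simp only [SetLike.mem_coe, Set.mem_ofPred_eq, ← ιMulti_apply, ι_mul_ιMulti]
  constructor
  · rintro ⟨x, rfl⟩ η
    exact ιMulti_eq_zero_of_finrank_lt (Nat.lt_succ_self _)
      (Fin.cases ⟨x, rfl⟩ fun j => ⟨η j, rfl⟩)
  · intro h
    by_contra hω
    obtain ⟨u, hu, hli⟩ := (LinearMap.range B).exists_linearIndependent_cons_of_notMem hω
    choose η hη using hu
    have hBη : (fun i => B (η i)) = u := funext hη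
    exact ιMulti_ne_zero_of_linearIndependent hli (hBη ▸ h η)

/-- Let `V`, `W` be finite-dimensional vector spaces over a field `K`,
`B : V → W` a linear map of rank `r`.  The map `ad^r B : W → Hom(Λ^r V, Λ^{r+1} W)` is
given by `(ad^r B)(ω)(η₁ ∧ … ∧ η_r) = ω ∧ Bη₁ ∧ … ∧ Bη_r` (wedge computed in the
exterior algebra of `W`).  Then `Im B = Ker (ad^r B)`: since the decomposable elements
`η₁ ∧ … ∧ η_r` span `Λ^r V`, the kernel of `ad^r B` is exactly the set of `ω ∈ W` whose
wedge with every `Bη₁ ∧ … ∧ Bη_r` vanishes. -/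
theorem statement0 {K V W : Type*} [Field K]
    [AddCommGroup V] [Module K V] [FiniteDimensional K V]
    [AddCommGroup W] [Module K W] [FiniteDimensional K W]
    (B : V →ₗ[K] W) (r : ℕ) (hr : r = Module.finrank K (LinearMap.range B)) :
    (LinearMap.range B : Set W) =
      {ω : W | ∀ η : Fin r → V,
        ExteriorAlgebra.ι K ω *
          (List.ofFn fun i => ExteriorAlgebra.ι K (B (η i))).prod = 0} :=
  statement0_general B r hr
end

section
/- Let V, V', W be finite-dimensional vector spaces over a field K, let B : V → W have rank r, and let A : V' → W be linear. Then for ξ ∈ V' there exists η ∈ V with Aξ + Bη = 0 if and only if ξ ∈ Ker((ad^r B) ∘ A), where ad^r B(ω)(η₁∧…∧η_r) = ω ∧ Bη₁ ∧ … ∧ Bη_r. -/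
/-!
Over a field a wedge `w₀ ∧ … ∧ w_r` vanishes exactly when the `wᵢ` are linearly dependent.
Since `range B` has dimension `r` and is spanned by `r` vectors `Bηᵢ`, a vector `w` lies in
`range B` iff `w, Bη₁, …, Bη_r` are dependent for every choice of the `ηᵢ`.
-/

open Module

namespace ExteriorAlgebra

theorem ι_mul_prod_ofFn_ι {R M : Type*} [CommRing R] [AddCommGroup M] [Module R M] {n : ℕ}
    (w : M) (u : Fin n → M) :
    ι R w * (List.ofFn fun i => ι R (u i)).prod = ιMulti R (n + 1) (Fin.cons w u) := by
  rw [ιMulti_apply, List.ofFn_succ, List.prod_cons]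
  simp only [Fin.cons_zero, Fin.cons_succ]

variable {K E : Type*} [Field K] [AddCommGroup E] [Module K E]

theorem ιMulti_ne_zero_of_linearIndependent_s1 {n : ℕ} {v : Fin n → E}
    (hv : LinearIndependent K v) : ιMulti K n v ≠ 0 := by
  -- `ιMulti K n v` is the member indexed by all of `Fin n` of the independent family of
  -- `n`-fold wedges of the `v i`.
  have := (exteriorPower.ιMulti_family_linearIndependent_field (n := n) hv).ne_zero
    (Set.powersetCard.ofFinEmbEquiv (RelEmbedding.refl _))
  rwa [exteriorPower.ιMulti_family, Equiv.symm_apply_apply, ne_eq,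
    ← Submodule.coe_eq_zero, exteriorPower.ιMulti_apply_coe] at this

theorem ιMulti_eq_zero_iff_not_linearIndependent {n : ℕ} {v : Fin n → E} :
    ιMulti K n v = 0 ↔ ¬LinearIndependent K v :=
  ⟨fun h hv => ιMulti_ne_zero_of_linearIndependent_s1 hv h,
    (ιMulti K n).map_linearDependent v⟩

end ExteriorAlgebra

theorem LinearMap.mem_range_iff_forall_not_linearIndependent_cons {K V W : Type*} [Field K]
    [AddCommGroup V] [Module K V] [AddCommGroup W] [Module K W] (B : V →ₗ[K] W)
    [FiniteDimensional K (range B)] (w : W) :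
    w ∈ range B ↔ ∀ η : Fin (finrank K (range B)) → V,
      ¬LinearIndependent K (Fin.cons w fun i => B (η i) : Fin _ → W) := by
  constructor
  · intro hw η hli
    have hmem : ∀ i, (Fin.cons w fun i => B (η i) : Fin _ → W) i ∈ range B :=
      Fin.cases hw fun i => mem_range_self B (η i)
    have := Submodule.finrank_mono (Submodule.span_le.2 (Set.range_subset_iff.2 hmem))
    rw [finrank_span_eq_card hli, Fintype.card_fin] at this
    omega
  · contrapose!
    intro hw
    let b := Module.finBasis K (range B)
    choose η hη using fun i => mem_range.1 (b i).2
    have hBη : (fun i => B (η i)) = (range B).subtype ∘ b := funext hη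
    refine ⟨η, linearIndependent_finCons.2 ⟨?_, ?_⟩⟩
    · rw [hBη]
      exact b.linearIndependent.map' _ (Submodule.ker_subtype _)
    · rwa [hBη, Set.range_comp, Submodule.span_image, b.span_eq, Submodule.map_top,
        Submodule.range_subtype]

theorem statement1_general {K V V' W : Type*} [Field K]
    [AddCommGroup V] [Module K V]
    [AddCommGroup V'] [Module K V']
    [AddCommGroup W] [Module K W] [FiniteDimensional K W]
    (B : V →ₗ[K] W) (A : V' →ₗ[K] W) (r : ℕ)
    (hr : r = Module.finrank K (LinearMap.range B)) :
    ∀ ξ : V', (∃ η : V, A ξ + B η = 0) ↔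
      ∀ η : Fin r → V,
        ExteriorAlgebra.ι K (A ξ) *
          (List.ofFn fun i => ExteriorAlgebra.ι K (B (η i))).prod = 0 := by
  subst hr
  intro ξ
  have hsolvable : (∃ η : V, A ξ + B η = 0) ↔ A ξ ∈ LinearMap.range B := by
    rw [← neg_mem_iff, LinearMap.mem_range]
    simp only [eq_comm (b := -A ξ), neg_eq_iff_add_eq_zero]
  simp only [hsolvable, B.mem_range_iff_forall_not_linearIndependent_cons,
    ExteriorAlgebra.ι_mul_prod_ofFn_ι, ExteriorAlgebra.ιMulti_eq_zero_iff_not_linearIndependent]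

/-- Let `V, V', W` be finite-dimensional vector spaces over a field `K`,
`B : V → W` of rank `r`, and `A : V' → W` linear.  Then for `ξ ∈ V'` there exists
`η ∈ V` with `Aξ + Bη = 0` if and only if `ξ ∈ Ker ((ad^r B) ∘ A)`, where
`(ad^r B)(ω)(η₁ ∧ … ∧ η_r) = ω ∧ Bη₁ ∧ … ∧ Bη_r`; membership in the kernel is
expressed by the vanishing of all the wedges `Aξ ∧ Bη₁ ∧ … ∧ Bη_r` (the decomposables
`η₁ ∧ … ∧ η_r` span `Λ^r V`). -/
theorem statement1 {K V V' W : Type*} [Field K]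
    [AddCommGroup V] [Module K V] [FiniteDimensional K V]
    [AddCommGroup V'] [Module K V'] [FiniteDimensional K V']
    [AddCommGroup W] [Module K W] [FiniteDimensional K W]
    (B : V →ₗ[K] W) (A : V' →ₗ[K] W) (r : ℕ)
    (hr : r = Module.finrank K (LinearMap.range B)) :
    ∀ ξ : V', (∃ η : V, A ξ + B η = 0) ↔
      ∀ η : Fin r → V,
        ExteriorAlgebra.ι K (A ξ) *
          (List.ofFn fun i => ExteriorAlgebra.ι K (B (η i))).prod = 0 :=
  statement1_general B A r hr
end

section
/- Hironaka division: Let F₁,…,F_s ∈ k[[y]] \ {0} with α^i = exp F_i. Set Δ_i = (α^i + ℕ^n) \ ⋃_{j<i} Δ_j and Δ = ℕ^n \ ⋃_{j≤s} Δ_j. Then for every G ∈ k[[y]] there exist unique Q₁,…,Q_s, R ∈ k[[y]] with G = Σ_i F_i Q_i + R, supp Q_i ⊆ { γ : α^i + γ ∈ Δ_i } and supp R ⊆ Δ; moreover exp R ≥ exp G and α^i + exp Q_i ≥ exp G for each i with Q_i ≠ 0. -/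
open MvPowerSeries

/-- Total-degree-then-lexicographic comparison on multi-indices. -/
def degLexLt {n : ℕ} (a b : Fin n →₀ ℕ) : Prop :=
  toLex ((∑ i, a i : ℕ), toLex a) < toLex ((∑ i, b i : ℕ), toLex b)

/-- `d` is the initial exponent `exp F` of the power series `F`: the minimum of the
support of `F` in the total-degree-then-lexicographic order. -/
def IsExpOf {K : Type*} [Field K] {n : ℕ}
    (F : MvPowerSeries (Fin n) K) (d : Fin n →₀ ℕ) : Prop :=
  coeff d F ≠ 0 ∧ ∀ e : Fin n →₀ ℕ, coeff e F ≠ 0 → ¬ degLexLt e d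

/-- The diagram of initial exponents `N(I) = { exp F : F ∈ I \ {0} }`. -/
def diagramOf {K : Type*} [Field K] {n : ℕ}
    (I : Ideal (MvPowerSeries (Fin n) K)) : Set (Fin n →₀ ℕ) :=
  {d | ∃ F ∈ I, F ≠ 0 ∧ IsExpOf F d}

/-- The translated cone `a + ℕ^n`. -/
def cone {n : ℕ} (a : Fin n →₀ ℕ) : Set (Fin n →₀ ℕ) :=
  {x | ∃ c : Fin n →₀ ℕ, x = a + c}

section DegLex
variable {n : ℕ}

noncomputable def dlphi (a : Fin n →₀ ℕ) : ℕ ×ₗ Lex (Fin n →₀ ℕ) :=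
  toLex ((∑ i, a i : ℕ), toLex a)

lemma degLexLt_iff {a b : Fin n →₀ ℕ} : degLexLt a b ↔ dlphi a < dlphi b := Iff.rfl

lemma dlphi_inj : Function.Injective (dlphi (n := n)) := by
  intro a b h
  have := congrArg (fun x => (ofLex x).2) h
  simpa [dlphi] using this

lemma dlt_wf : WellFounded (degLexLt (n := n)) :=
  InvImage.wf dlphi (wellFounded_lt)

lemma dlt_irrefl (a : Fin n →₀ ℕ) : ¬ degLexLt a a := lt_irrefl _

lemma dlt_trans {a b c : Fin n →₀ ℕ} : degLexLt a b → degLexLt b c → degLexLt a c :=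
  fun h1 h2 => lt_trans (degLexLt_iff.mp h1) (degLexLt_iff.mp h2)

lemma dlt_total (a b : Fin n →₀ ℕ) : degLexLt a b ∨ a = b ∨ degLexLt b a := by
  rcases lt_trichotomy (dlphi a) (dlphi b) with h | h | h
  · exact Or.inl h
  · exact Or.inr (Or.inl (dlphi_inj h))
  · exact Or.inr (Or.inr h)

lemma dlt_add_right {a b : Fin n →₀ ℕ} (c : Fin n →₀ ℕ) (h : degLexLt a b) :
    degLexLt (a + c) (b + c) := by
  rw [degLexLt_iff] at h ⊢
  rw [dlphi, dlphi, Prod.Lex.lt_iff] at h ⊢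
  have hsum : ∀ x : Fin n →₀ ℕ, (∑ i, (x + c) i : ℕ) = (∑ i, x i) + ∑ i, c i := by
    intro x; simp [Finsupp.add_apply, Finset.sum_add_distrib]
  have hlex : toLex (a + c) = toLex a + toLex c := rfl
  have hlex' : toLex (b + c) = toLex b + toLex c := rfl
  rcases h with h | ⟨h1, h2⟩
  · exact Or.inl (by simp only [hsum]; exact Nat.add_lt_add_right h _)
  · refine Or.inr ⟨by simp only [hsum]; simp_all, ?_⟩
    show toLex (a + c) < toLex (b + c)
    rw [hlex, hlex']
    exact add_lt_add_left h2 _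

lemma dlt_asymm {a b : Fin n →₀ ℕ} (h : degLexLt a b) : ¬ degLexLt b a :=
  fun h' => dlt_irrefl a (dlt_trans h h')

/-- The key factorization step: if `p1` is not below `α` and `α + p2` is not below
`p1 + p2`, then `p1 = α`. -/
lemma dlt_factor {α p1 p2 d : Fin n →₀ ℕ} (hsum : p1 + p2 = d)
    (h1 : ¬ degLexLt p1 α) (h2 : ¬ degLexLt (α + p2) d) : p1 = α := by
  rcases dlt_total p1 α with h | h | h
  · exact absurd h h1
  · exact h
  · exact absurd (hsum ▸ dlt_add_right p2 h) h2

lemma finsupp_add_left_cancel {a b c : Fin n →₀ ℕ} (h : a + b = a + c) : b = c := by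
  ext i
  have := congrArg (fun x => x i) h
  simpa [Finsupp.add_apply] using this

end DegLex

section Division

open MvPowerSeries Classical

variable {K : Type*} [Field K] {n s : ℕ}
  (F : Fin s → MvPowerSeries (Fin n) K) (α : Fin s → (Fin n →₀ ℕ))
  (Δi : Fin s → Set (Fin n →₀ ℕ)) (G : MvPowerSeries (Fin n) K)

/-- The inner "already determined" part of the coefficient of `∑ F i * Q i` at `d`. -/
noncomputable def hvS (d : Fin n →₀ ℕ) (v : (Fin n →₀ ℕ) → K) : K :=
  ∑ j : Fin s, ∑ p ∈ Finset.HasAntidiagonal.antidiagonal d,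
    if h : (α j + p.2 ∈ Δi j) ∧ degLexLt (α j + p.2) d
    then coeff p.1 (F j) * v (α j + p.2) else 0

noncomputable def hvBody (d : Fin n →₀ ℕ) (ih : ∀ e, degLexLt e d → K) : K :=
  if hd : ∃ i, d ∈ Δi i
  then (coeff d G -
      (∑ j : Fin s, ∑ p ∈ Finset.HasAntidiagonal.antidiagonal d,
        if h : (α j + p.2 ∈ Δi j) ∧ degLexLt (α j + p.2) d
        then coeff p.1 (F j) * ih (α j + p.2) h.2 else 0)) /
      coeff (α hd.choose) (F hd.choose)
  else coeff d G -
      ∑ j : Fin s, ∑ p ∈ Finset.HasAntidiagonal.antidiagonal d,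
        if h : (α j + p.2 ∈ Δi j) ∧ degLexLt (α j + p.2) d
        then coeff p.1 (F j) * ih (α j + p.2) h.2 else 0

noncomputable def hv : (Fin n →₀ ℕ) → K :=
  dlt_wf.fix (hvBody F α Δi G)

lemma hv_spec (d : Fin n →₀ ℕ) :
    hv F α Δi G d =
      if hd : ∃ i, d ∈ Δi i
      then (coeff d G - hvS F α Δi d (hv F α Δi G)) / coeff (α hd.choose) (F hd.choose)
      else coeff d G - hvS F α Δi d (hv F α Δi G) := by
  rw [hv, WellFounded.fix_eq]
  rfl

/-- The quotients. -/
noncomputable def Qd (i : Fin s) : MvPowerSeries (Fin n) K :=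
  fun γ => if α i + γ ∈ Δi i then hv F α Δi G (α i + γ) else 0

/-- The remainder. -/
noncomputable def Rd : MvPowerSeries (Fin n) K :=
  fun d => if ∃ i, d ∈ Δi i then 0 else hv F α Δi G d

lemma coeff_Qd (i : Fin s) (γ : Fin n →₀ ℕ) :
    coeff γ (Qd F α Δi G i) =
      if α i + γ ∈ Δi i then hv F α Δi G (α i + γ) else 0 := rfl

lemma coeff_Rd (d : Fin n →₀ ℕ) :
    coeff d (Rd F α Δi G) = if ∃ i, d ∈ Δi i then 0 else hv F α Δi G d := rfl

end Division

section Main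

open MvPowerSeries

variable {K : Type*} [Field K] {n s : ℕ}
  {F : Fin s → MvPowerSeries (Fin n) K} {α : Fin s → (Fin n →₀ ℕ)}
  {Δi : Fin s → Set (Fin n →₀ ℕ)} {Δ : Set (Fin n →₀ ℕ)}

lemma delta_disjoint
    (hΔi : ∀ i, Δi i = cone (α i) \ ⋃ j : Fin s, ⋃ _ : j < i, cone (α j))
    {i j : Fin s} {d : Fin n →₀ ℕ} (hi : d ∈ Δi i) (hj : d ∈ Δi j) : i = j := by
  by_contra hne
  rcases Ne.lt_or_gt hne with h | h
  · have h1 : d ∈ cone (α i) := by rw [hΔi i] at hi; exact hi.1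
    rw [hΔi j] at hj
    exact hj.2 (Set.mem_iUnion.mpr ⟨i, Set.mem_iUnion.mpr ⟨h, h1⟩⟩)
  · have h1 : d ∈ cone (α j) := by rw [hΔi j] at hj; exact hj.1
    rw [hΔi i] at hi
    exact hi.2 (Set.mem_iUnion.mpr ⟨j, Set.mem_iUnion.mpr ⟨h, h1⟩⟩)

lemma delta_cone
    (hΔi : ∀ i, Δi i = cone (α i) \ ⋃ j : Fin s, ⋃ _ : j < i, cone (α j))
    {i : Fin s} {d : Fin n →₀ ℕ} (hi : d ∈ Δi i) : ∃ γ, d = α i + γ := by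
  rw [hΔi i] at hi; exact hi.1

lemma term_analysis (hα : ∀ i, IsExpOf (F i) (α i)) {d : Fin n →₀ ℕ} {j : Fin s}
    {p : (Fin n →₀ ℕ) × (Fin n →₀ ℕ)} (hsum : p.1 + p.2 = d)
    (hf : coeff p.1 (F j) ≠ 0) (hA : α j + p.2 ∈ Δi j)
    (hnB : ¬ degLexLt (α j + p.2) d) :
    p.1 = α j ∧ d = α j + p.2 ∧ d ∈ Δi j := by
  have h1 : p.1 = α j := dlt_factor hsum ((hα j).2 _ hf) hnB
  have h2 : d = α j + p.2 := by rw [← hsum, h1]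
  exact ⟨h1, h2, h2 ▸ hA⟩

/-- The division identity for the constructed quotients and remainder. -/
lemma div_identity (hα : ∀ i, IsExpOf (F i) (α i))
    (hΔi : ∀ i, Δi i = cone (α i) \ ⋃ j : Fin s, ⋃ _ : j < i, cone (α j))
    (G : MvPowerSeries (Fin n) K) :
    G = (∑ i, F i * Qd F α Δi G i) + Rd F α Δi G := by
  classical
  ext d
  symm
  rw [map_add, map_sum]
  simp_rw [coeff_mul, coeff_Qd]
  set v := hv F α Δi G with hvdef
  -- termwise decomposition
  have hterm : ∀ (j : Fin s), ∀ p ∈ Finset.HasAntidiagonal.antidiagonal d,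
      coeff p.1 (F j) * (if α j + p.2 ∈ Δi j then v (α j + p.2) else 0) =
        (if _h : (α j + p.2 ∈ Δi j) ∧ degLexLt (α j + p.2) d
          then coeff p.1 (F j) * v (α j + p.2) else 0) +
        (if (α j + p.2 ∈ Δi j) ∧ ¬ degLexLt (α j + p.2) d
          then coeff p.1 (F j) * v (α j + p.2) else 0) := by
    intro j p _
    by_cases hA : α j + p.2 ∈ Δi j <;> by_cases hB : degLexLt (α j + p.2) d <;>
      simp [hA, hB]
  rw [Finset.sum_congr rfl fun j _ => Finset.sum_congr rfl (hterm j)]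
  simp_rw [Finset.sum_add_distrib]
  rw [← hvS]
  set X := ∑ j : Fin s, ∑ p ∈ Finset.HasAntidiagonal.antidiagonal d,
      (if (α j + p.2 ∈ Δi j) ∧ ¬ degLexLt (α j + p.2) d
        then coeff p.1 (F j) * v (α j + p.2) else 0) with hX
  -- analysis of any nonzero `X`-term
  have hXterm : ∀ (j : Fin s), ∀ p ∈ Finset.HasAntidiagonal.antidiagonal d,
      (if (α j + p.2 ∈ Δi j) ∧ ¬ degLexLt (α j + p.2) d
        then coeff p.1 (F j) * v (α j + p.2) else 0) ≠ 0 →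
      p.1 = α j ∧ d = α j + p.2 ∧ d ∈ Δi j := by
    intro j p hp h0
    by_cases hc : (α j + p.2 ∈ Δi j) ∧ ¬ degLexLt (α j + p.2) d
    · rw [if_pos hc] at h0
      have hf : coeff p.1 (F j) ≠ 0 := left_ne_zero_of_mul h0
      exact term_analysis hα (Finset.HasAntidiagonal.mem_antidiagonal.mp hp) hf hc.1 hc.2
    · exact absurd (if_neg hc) h0
  by_cases hd : ∃ i, d ∈ Δi i
  · -- d is in some Δᵢ
    set i₀ := hd.choose with hi₀def
    have hi₀ : d ∈ Δi i₀ := hd.choose_spec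
    obtain ⟨γ₀, hγ₀⟩ := delta_cone hΔi hi₀
    have hXval : X = coeff (α i₀) (F i₀) * v d := by
      rw [hX]
      rw [Finset.sum_eq_single_of_mem i₀ (Finset.mem_univ _)]
      · rw [Finset.sum_eq_single_of_mem ((α i₀, γ₀) : (Fin n →₀ ℕ) × (Fin n →₀ ℕ))
            (Finset.HasAntidiagonal.mem_antidiagonal.mpr hγ₀.symm)]
        · rw [if_pos ⟨hγ₀ ▸ hi₀, hγ₀ ▸ dlt_irrefl d⟩]
          rw [← hγ₀]
        · intro p hp hne
          by_contra h0
          obtain ⟨h1, h2, _⟩ := hXterm i₀ p hp h0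
          refine hne (Prod.ext h1 ?_)
          exact finsupp_add_left_cancel (hγ₀ ▸ h2.symm)
      · intro j _ hj
        refine Finset.sum_eq_zero fun p hp => ?_
        by_contra h0
        obtain ⟨_, _, h3⟩ := hXterm j p hp h0
        exact hj (delta_disjoint hΔi h3 hi₀)
    have hR0 : coeff d (Rd F α Δi G) = 0 := by rw [coeff_Rd, if_pos hd]
    have hv0 : v d = (coeff d G - hvS F α Δi d v) / coeff (α i₀) (F i₀) := by
      rw [hvdef, hv_spec, dif_pos hd]
    rw [hXval, hR0, hv0, mul_div_cancel₀ _ (hα i₀).1]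
    ring
  · -- d is in no Δᵢ
    have hXval : X = 0 := by
      rw [hX]
      refine Finset.sum_eq_zero fun j _ => Finset.sum_eq_zero fun p hp => ?_
      by_contra h0
      obtain ⟨_, _, h3⟩ := hXterm j p hp h0
      exact hd ⟨j, h3⟩
    have hR0 : coeff d (Rd F α Δi G) = v d := by rw [coeff_Rd, if_neg hd]
    have hv0 : v d = coeff d G - hvS F α Δi d v := by
      rw [hvdef, hv_spec, dif_neg hd]
    rw [hXval, hR0, hv0]
    ring

lemma Qd_supp (G : MvPowerSeries (Fin n) K) (i : Fin s) (γ : Fin n →₀ ℕ)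
    (h : coeff γ (Qd F α Δi G i) ≠ 0) : α i + γ ∈ Δi i := by
  rw [coeff_Qd] at h
  by_cases hA : α i + γ ∈ Δi i
  · exact hA
  · exact absurd (if_neg hA) h

lemma Rd_supp (hΔ : Δ = Set.univ \ ⋃ i : Fin s, Δi i)
    (G : MvPowerSeries (Fin n) K) (d : Fin n →₀ ℕ)
    (h : coeff d (Rd F α Δi G) ≠ 0) : d ∈ Δ := by
  rw [coeff_Rd] at h
  by_cases hd : ∃ i, d ∈ Δi i
  · exact absurd (if_pos hd) h
  · rw [hΔ]
    exact ⟨Set.mem_univ _, by simpa [Set.mem_iUnion] using hd⟩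

/-- Key lemma: at a point `d` of the "combined support" which is minimal for the
quotient part, the coefficient of `∑ F i * Q' i + R'` does not vanish. -/
lemma key_lemma (hα : ∀ i, IsExpOf (F i) (α i))
    (hΔi : ∀ i, Δi i = cone (α i) \ ⋃ j : Fin s, ⋃ _ : j < i, cone (α j))
    (hΔ : Δ = Set.univ \ ⋃ i : Fin s, Δi i)
    (Q' : Fin s → MvPowerSeries (Fin n) K) (R' : MvPowerSeries (Fin n) K)
    (hQ' : ∀ i, ∀ γ : Fin n →₀ ℕ, coeff γ (Q' i) ≠ 0 → α i + γ ∈ Δi i)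
    (hR' : ∀ d : Fin n →₀ ℕ, coeff d R' ≠ 0 → d ∈ Δ)
    (d : Fin n →₀ ℕ)
    (hd : coeff d R' ≠ 0 ∨ ∃ j γ, coeff γ (Q' j) ≠ 0 ∧ d = α j + γ)
    (hmin : ∀ (j : Fin s) (γ : Fin n →₀ ℕ), coeff γ (Q' j) ≠ 0 →
      ¬ degLexLt (α j + γ) d) :
    coeff d ((∑ j, F j * Q' j) + R') ≠ 0 := by
  classical
  rw [map_add, map_sum]
  simp_rw [coeff_mul]
  have hterm : ∀ (j : Fin s), ∀ p ∈ Finset.HasAntidiagonal.antidiagonal d,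
      coeff p.1 (F j) * coeff p.2 (Q' j) ≠ 0 →
      p.1 = α j ∧ d = α j + p.2 ∧ d ∈ Δi j := by
    intro j p hp h0
    have hf : coeff p.1 (F j) ≠ 0 := left_ne_zero_of_mul h0
    have hq : coeff p.2 (Q' j) ≠ 0 := right_ne_zero_of_mul h0
    exact term_analysis hα (Finset.HasAntidiagonal.mem_antidiagonal.mp hp) hf (hQ' j p.2 hq)
      (hmin j p.2 hq)
  rcases hd with hd | ⟨j, γ, hq, hdeq⟩
  · have hdΔ : d ∈ Δ := hR' d hd
    have hsum0 : ∀ j : Fin s, ∑ p ∈ Finset.HasAntidiagonal.antidiagonal d,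
        coeff p.1 (F j) * coeff p.2 (Q' j) = 0 := by
      intro j
      refine Finset.sum_eq_zero fun p hp => ?_
      by_contra h0
      obtain ⟨_, _, h3⟩ := hterm j p hp h0
      rw [hΔ] at hdΔ
      exact hdΔ.2 (Set.mem_iUnion.mpr ⟨j, h3⟩)
    rw [Finset.sum_eq_zero fun j _ => hsum0 j, zero_add]
    exact hd
  · have hdj : d ∈ Δi j := hdeq ▸ hQ' j γ hq
    have hR0 : coeff d R' = 0 := by
      by_contra h0
      have := hR' d h0
      rw [hΔ] at this
      exact this.2 (Set.mem_iUnion.mpr ⟨j, hdj⟩)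
    have hsumval : ∑ j' : Fin s, ∑ p ∈ Finset.HasAntidiagonal.antidiagonal d,
        coeff p.1 (F j') * coeff p.2 (Q' j') =
        coeff (α j) (F j) * coeff γ (Q' j) := by
      rw [Finset.sum_eq_single_of_mem j (Finset.mem_univ _)]
      · rw [Finset.sum_eq_single_of_mem ((α j, γ) : (Fin n →₀ ℕ) × (Fin n →₀ ℕ))
            (Finset.HasAntidiagonal.mem_antidiagonal.mpr hdeq.symm)]
        intro p hp hne
        by_contra h0
        obtain ⟨h1, h2, _⟩ := hterm j p hp h0
        refine hne (Prod.ext h1 ?_)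
        exact finsupp_add_left_cancel (hdeq ▸ h2.symm)
      · intro j' _ hj'
        refine Finset.sum_eq_zero fun p hp => ?_
        by_contra h0
        obtain ⟨_, _, h3⟩ := hterm j' p hp h0
        exact hj' (delta_disjoint hΔi h3 hdj)
    rw [hsumval, hR0, add_zero]
    exact mul_ne_zero (hα j).1 hq

end Main


/-- **Hironaka division.** Let `F₁,…,F_s ∈ k[[y]] \ {0}` with
`α^i = exp F_i`.  Set `Δ_i = (α^i + ℕ^n) \ ⋃_{j<i} Δ_j` (equivalently
`(α^i + ℕ^n) \ ⋃_{j<i} (α^j + ℕ^n)`) and `Δ = ℕ^n \ ⋃_i Δ_i`.  Then for every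
`G ∈ k[[y]]` there exist unique `Q₁,…,Q_s, R ∈ k[[y]]` with `G = Σ_i F_i Q_i + R`,
`supp Q_i ⊆ { γ : α^i + γ ∈ Δ_i }` and `supp R ⊆ Δ`; moreover `exp R ≥ exp G` and
`α^i + exp Q_i ≥ exp G` whenever the corresponding series is nonzero. -/
theorem statement8 {K : Type*} [Field K] {n s : ℕ}
    (F : Fin s → MvPowerSeries (Fin n) K) (hF : ∀ i, F i ≠ 0)
    (α : Fin s → (Fin n →₀ ℕ)) (hα : ∀ i, IsExpOf (F i) (α i))
    (Δi : Fin s → Set (Fin n →₀ ℕ))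
    (hΔi : ∀ i, Δi i = cone (α i) \ ⋃ j : Fin s, ⋃ _ : j < i, cone (α j))
    (Δ : Set (Fin n →₀ ℕ))
    (hΔ : Δ = Set.univ \ ⋃ i : Fin s, Δi i) :
    ∀ G : MvPowerSeries (Fin n) K,
      ∃ (Q : Fin s → MvPowerSeries (Fin n) K) (R : MvPowerSeries (Fin n) K),
        (G = (∑ i, F i * Q i) + R) ∧
        (∀ i, ∀ γ : Fin n →₀ ℕ, MvPowerSeries.coeff γ (Q i) ≠ 0 → α i + γ ∈ Δi i) ∧
        (∀ d : Fin n →₀ ℕ, MvPowerSeries.coeff d R ≠ 0 → d ∈ Δ) ∧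
        (∀ (Q' : Fin s → MvPowerSeries (Fin n) K) (R' : MvPowerSeries (Fin n) K),
          (G = (∑ i, F i * Q' i) + R') →
          (∀ i, ∀ γ : Fin n →₀ ℕ, MvPowerSeries.coeff γ (Q' i) ≠ 0 → α i + γ ∈ Δi i) →
          (∀ d : Fin n →₀ ℕ, MvPowerSeries.coeff d R' ≠ 0 → d ∈ Δ) →
          Q' = Q ∧ R' = R) ∧
        (∀ dG : Fin n →₀ ℕ, IsExpOf G dG →
          (∀ dR : Fin n →₀ ℕ, IsExpOf R dR → ¬ degLexLt dR dG) ∧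
          (∀ i, ∀ dq : Fin n →₀ ℕ, IsExpOf (Q i) dq → ¬ degLexLt (α i + dq) dG)) := by
  intro G
  classical
  refine ⟨Qd F α Δi G, Rd F α Δi G, div_identity hα hΔi G, Qd_supp G, Rd_supp hΔ G,
    ?_, ?_⟩
  · -- uniqueness
    intro Q' R' hG' hQ' hR'
    set Q := Qd F α Δi G
    set R := Rd F α Δi G
    have hident : G = (∑ i, F i * Q i) + R := div_identity hα hΔi G
    set Q'' : Fin s → MvPowerSeries (Fin n) K := fun j => Q' j - Q j with hQ''def
    set R'' : MvPowerSeries (Fin n) K := R' - R with hR''def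
    have hzero : (∑ j, F j * Q'' j) + R'' = 0 := by
      simp only [hQ''def, hR''def, mul_sub, Finset.sum_sub_distrib]
      rw [hG'] at hident
      linear_combination hident
    have hQ''supp : ∀ i, ∀ γ : Fin n →₀ ℕ, coeff γ (Q'' i) ≠ 0 → α i + γ ∈ Δi i := by
      intro i γ h
      rw [hQ''def] at h
      simp only [map_sub] at h
      by_cases h1 : coeff γ (Q' i) = 0
      · by_cases h2 : coeff γ (Q i) = 0
        · simp [h1, h2] at h
        · exact Qd_supp G i γ h2
      · exact hQ' i γ h1
    have hR''supp : ∀ d : Fin n →₀ ℕ, coeff d R'' ≠ 0 → d ∈ Δ := by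
      intro d h
      rw [hR''def] at h
      simp only [map_sub] at h
      by_cases h1 : coeff d R' = 0
      · by_cases h2 : coeff d R = 0
        · simp [h1, h2] at h
        · exact Rd_supp hΔ G d h2
      · exact hR' d h1
    set U : Set (Fin n →₀ ℕ) :=
      {u | coeff u R'' ≠ 0 ∨ ∃ j γ, coeff γ (Q'' j) ≠ 0 ∧ u = α j + γ} with hUdef
    have hUempty : U = ∅ := by
      by_contra hne
      have hUne : U.Nonempty := Set.nonempty_iff_ne_empty.mpr hne
      set d := dlt_wf.min U hUne with hddef
      have hdU : d ∈ U := dlt_wf.min_mem U hUne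
      have hmin : ∀ (j : Fin s) (γ : Fin n →₀ ℕ), coeff γ (Q'' j) ≠ 0 →
          ¬ degLexLt (α j + γ) d := by
        intro j γ hq
        exact dlt_wf.not_lt_min U (Or.inr ⟨j, γ, hq, rfl⟩)
      have := key_lemma hα hΔi hΔ Q'' R'' hQ''supp hR''supp d hdU hmin
      rw [hzero, map_zero] at this
      exact this rfl
    constructor
    · funext i
      apply MvPowerSeries.ext
      intro γ
      by_contra hne
      have h : coeff γ (Q'' i) ≠ 0 := by
        rw [hQ''def]; simp only [map_sub]; exact sub_ne_zero_of_ne hne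
      have : (α i + γ) ∈ U := Or.inr ⟨i, γ, h, rfl⟩
      rw [hUempty] at this
      exact this
    · apply MvPowerSeries.ext
      intro d
      by_contra hne
      have h : coeff d R'' ≠ 0 := by
        rw [hR''def]; simp only [map_sub]; exact sub_ne_zero_of_ne hne
      have : d ∈ U := Or.inl h
      rw [hUempty] at this
      exact this
  · -- initial exponent bounds
    intro dG hdG
    set Q := Qd F α Δi G
    set R := Rd F α Δi G
    have hident : G = (∑ i, F i * Q i) + R := div_identity hα hΔi G
    set U : Set (Fin n →₀ ℕ) :=
      {u | coeff u R ≠ 0 ∨ ∃ j γ, coeff γ (Q j) ≠ 0 ∧ u = α j + γ} with hUdef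
    have hkey : ∀ u ∈ U, ¬ degLexLt u dG := by
      intro u hu hlt
      have hUne : U.Nonempty := ⟨u, hu⟩
      set d := dlt_wf.min U hUne with hddef
      have hdU : d ∈ U := dlt_wf.min_mem U hUne
      have hmin : ∀ (j : Fin s) (γ : Fin n →₀ ℕ), coeff γ (Q j) ≠ 0 →
          ¬ degLexLt (α j + γ) d := by
        intro j γ hq
        exact dlt_wf.not_lt_min U (Or.inr ⟨j, γ, hq, rfl⟩)
      have hne0 : coeff d G ≠ 0 := by
        rw [hident]
        exact key_lemma hα hΔi hΔ Q R (Qd_supp G) (Rd_supp hΔ G) d hdU hmin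
      have hnd : ¬ degLexLt d dG := hdG.2 d hne0
      have hnu : ¬ degLexLt u d := dlt_wf.not_lt_min U hu
      rcases dlt_total d u with h | h | h
      · exact hnd (dlt_trans h hlt)
      · exact hnd (h ▸ hlt)
      · exact hnu h
    constructor
    · intro dR hdR hlt
      exact hkey dR (Or.inl hdR.1) hlt
    · intro i dq hdq hlt
      exact hkey (α i + dq) (Or.inr ⟨i, dq, hdq.1, rfl⟩) hlt
end

section
/- Let I be an ideal in k[[y]] with diagram N = N(I), and let k[[y]]^N = { F ∈ k[[y]] : supp F ⊆ ℕ^n \ N }. Then k[[y]] = I ⊕ k[[y]]^N as k-vector spaces. -/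
/-!
Uniqueness: the difference of two decompositions lies in `I`; if it were nonzero, its initial
exponent would lie in `N(I)`, where neither remainder has a coefficient.

Existence is Hironaka's division. By Dickson's lemma, `N(I)` is covered by the cones `d + ℕⁿ`
over finitely many `d ∈ N(I)`, each the initial exponent of some `g d ∈ I`. Going through the
exponents `e ∈ N(I)` along the degLex well-order, subtract the multiple of `X^(e - d) * g d`
(with `e ∈ d + ℕⁿ`) that kills the coefficient at `e`; this only changes coefficients at
exponents `≥ e`, and grouping the subtracted terms by `d` gives `∑ d, Q d * g d ∈ I`.
-/

open MvPowerSeries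

theorem exists_finset_subset_forall_exists_le {α : Type*} [PartialOrder α] [WellQuasiOrderedLE α]
    (s : Set α) : ∃ B : Finset α, ↑B ⊆ s ∧ ∀ a ∈ s, ∃ b ∈ B, b ≤ a := by
  have hmin : {b | Minimal (· ∈ s) b}.Finite :=
    (setOfPred_minimal_antichain _).finite_of_partiallyWellOrderedOn
      ((Set.isPWO_of_wellQuasiOrderedLE s).mono fun _ hb => hb.prop)
  refine ⟨hmin.toFinset, fun b hb => (hmin.mem_toFinset.1 hb).prop, fun a ha => ?_⟩
  obtain ⟨b, hba, hb⟩ := (Set.isPWO_of_wellQuasiOrderedLE s).exists_le_minimal ha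
  exact ⟨b, hmin.mem_toFinset.2 hb, hba⟩

section DegLex

variable {n : ℕ}

theorem degLexLt_iff_toDegLex_lt {a b : Fin n →₀ ℕ} :
    degLexLt a b ↔ toDegLex a < toDegLex b := by
  simp [degLexLt, Finsupp.DegLex.lt_def, Finsupp.degree_eq_sum]

variable {K : Type*} [Field K]

theorem isExpOf_iff {F : MvPowerSeries (Fin n) K} {d : Fin n →₀ ℕ} :
    IsExpOf F d ↔ coeff d F ≠ 0 ∧ ∀ e, coeff e F ≠ 0 → toDegLex d ≤ toDegLex e := by
  simp [IsExpOf, degLexLt_iff_toDegLex_lt]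

theorem exists_isExpOf {F : MvPowerSeries (Fin n) K} (hF : F ≠ 0) : ∃ d, IsExpOf F d := by
  obtain ⟨d, hd⟩ : ∃ d, coeff d F ≠ 0 := by
    by_contra! h
    exact hF (ext fun d => by simpa using h d)
  obtain ⟨e, he, hmin⟩ := WellFounded.has_min wellFounded_lt
    {e : DegLex (Fin n →₀ ℕ) | coeff (ofDegLex e) F ≠ 0} ⟨toDegLex d, hd⟩
  exact ⟨ofDegLex e, isExpOf_iff.2 ⟨he, fun e' he' => not_lt.1 (hmin (toDegLex e') he')⟩⟩

end DegLex

section Division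

open scoped Classical
open Finset.HasAntidiagonal

variable {K : Type*} [Field K] {n : ℕ}
  (B : Finset (Fin n →₀ ℕ)) (g : (Fin n →₀ ℕ) → MvPowerSeries (Fin n) K)
  (N : Set (Fin n →₀ ℕ)) (p : (Fin n →₀ ℕ) → (Fin n →₀ ℕ))

/-- `C e` is the coefficient of `X^(e - p e) * g (p e)` in the division of a series by the
`g d`; grouping the terms with `p e = d` gives the quotient by `g d`. -/
noncomputable def divisionQuotient (C : (Fin n →₀ ℕ) → K) (d : Fin n →₀ ℕ) :
    MvPowerSeries (Fin n) K :=
  fun a => if a + d ∈ N ∧ p (a + d) = d then C (a + d) else 0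

theorem coeff_divisionQuotient (C : (Fin n →₀ ℕ) → K) (d a : Fin n →₀ ℕ) :
    coeff a (divisionQuotient N p C d) = if a + d ∈ N ∧ p (a + d) = d then C (a + d) else 0 :=
  rfl

theorem divisionQuotient_add (C₁ C₂ : (Fin n →₀ ℕ) → K) (d : Fin n →₀ ℕ) :
    divisionQuotient N p (C₁ + C₂) d =
      divisionQuotient N p C₁ d + divisionQuotient N p C₂ d := by
  ext a
  simp only [coeff_divisionQuotient, map_add, Pi.add_apply]
  split_ifs <;> simp

noncomputable def divisionSum (C : (Fin n →₀ ℕ) → K) : MvPowerSeries (Fin n) K :=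
  ∑ d ∈ B, divisionQuotient N p C d * g d

theorem divisionSum_add (C₁ C₂ : (Fin n →₀ ℕ) → K) :
    divisionSum B g N p (C₁ + C₂) = divisionSum B g N p C₁ + divisionSum B g N p C₂ := by
  simp only [divisionSum, divisionQuotient_add, add_mul, Finset.sum_add_distrib]

variable {B g N p}

theorem coeff_divisionSum_of_forall_lt_eq_zero (hg : ∀ d ∈ B, IsExpOf (g d) d)
    (hp : ∀ e ∈ N, p e ∈ B ∧ p e ≤ e) {C : (Fin n →₀ ℕ) → K} {x : Fin n →₀ ℕ}
    (hC : ∀ e, toDegLex e < toDegLex x → C e = 0) :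
    coeff x (divisionSum B g N p C) = if x ∈ N then C x * coeff (p x) (g (p x)) else 0 := by
  -- a nonzero term with `a + b = x` forces `x ≤ a + d ≤ a + b = x` in degLex
  have key : ∀ d ∈ B, ∀ ab ∈ antidiagonal x,
      coeff ab.1 (divisionQuotient N p C d) * coeff ab.2 (g d) ≠ 0 →
        x ∈ N ∧ p x = d ∧ ab = (x - d, d) := by
    rintro d hd ⟨a, b⟩ hab hne
    rw [mem_antidiagonal] at hab
    rw [coeff_divisionQuotient] at hne
    obtain ⟨⟨haN, hpa⟩, hCa⟩ : (a + d ∈ N ∧ p (a + d) = d) ∧ C (a + d) ≠ 0 := by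
      split_ifs at hne with h
      · exact ⟨h, left_ne_zero_of_mul hne⟩
      · simp at hne
    have hle : toDegLex (a + d) ≤ toDegLex x := by
      rw [← hab, toDegLex_add, toDegLex_add]
      exact add_le_add_right ((isExpOf_iff.1 (hg d hd)).2 b (right_ne_zero_of_mul hne)) _
    have hax : a + d = x := toDegLex_inj.1 (hle.antisymm (not_lt.1 (mt (hC _) hCa)))
    obtain rfl : d = b := add_left_cancel (hax.trans hab.symm)
    subst hax
    exact ⟨haN, hpa, by simp⟩
  simp only [divisionSum, map_sum, coeff_mul]
  split_ifs with hx
  · obtain ⟨hpB, hpx⟩ := hp x hx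
    rw [Finset.sum_eq_single (p x), Finset.sum_eq_single (x - p x, p x)]
    · simp [coeff_divisionQuotient, tsub_add_cancel_of_le hpx, hx]
    · exact fun ab hab hne => by_contra fun h => hne (key _ hpB ab hab h).2.2
    · simp [tsub_add_cancel_of_le hpx]
    · exact fun d hd hne => Finset.sum_eq_zero fun ab hab =>
        by_contra fun h => hne (key d hd ab hab h).2.1.symm
    · exact fun h => (h hpB).elim
  · exact Finset.sum_eq_zero fun d hd => Finset.sum_eq_zero fun ab hab =>
      by_contra fun h => hx (key d hd ab hab h).1

theorem coeff_divisionSum (hg : ∀ d ∈ B, IsExpOf (g d) d) (hp : ∀ e ∈ N, p e ∈ B ∧ p e ≤ e)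
    (C : (Fin n →₀ ℕ) → K) (x : Fin n →₀ ℕ) :
    coeff x (divisionSum B g N p C) =
      coeff x (divisionSum B g N p fun e => if toDegLex e < toDegLex x then C e else 0) +
        if x ∈ N then C x * coeff (p x) (g (p x)) else 0 := by
  have hsplit : C = (fun e => if toDegLex e < toDegLex x then C e else 0) +
      fun e => if toDegLex e < toDegLex x then 0 else C e := by
    ext e
    simp only [Pi.add_apply]
    split_ifs <;> simp
  conv_lhs => rw [hsplit, divisionSum_add, map_add]
  rw [coeff_divisionSum_of_forall_lt_eq_zero hg hp fun e he => if_pos he, if_neg (lt_irrefl _)]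

variable (B g N p) in
/-- The coefficients of the division of `F`, chosen degLex-recursively so that the remainder
has no coefficient at exponents in `N`. -/
noncomputable def divisionCoeff (F : MvPowerSeries (Fin n) K) (x : Fin n →₀ ℕ) : K :=
  WellFoundedLT.fix (α := DegLex (Fin n →₀ ℕ)) (motive := fun _ => K)
    (fun y IH => if ofDegLex y ∈ N then
      (coeff (ofDegLex y) F - coeff (ofDegLex y) (divisionSum B g N p fun e =>
        if h : toDegLex e < y then IH (toDegLex e) h else 0)) /
          coeff (p (ofDegLex y)) (g (p (ofDegLex y)))
      else 0) (toDegLex x)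

variable (B g N p) in
theorem divisionCoeff_eq (F : MvPowerSeries (Fin n) K) (x : Fin n →₀ ℕ) :
    divisionCoeff B g N p F x = if x ∈ N then
      (coeff x F - coeff x (divisionSum B g N p fun e =>
        if toDegLex e < toDegLex x then divisionCoeff B g N p F e else 0)) / coeff (p x) (g (p x))
      else 0 := by
  rw [divisionCoeff, WellFoundedLT.fix_eq]
  simp only [dite_eq_ite]
  rfl

theorem coeff_sub_divisionSum_divisionCoeff (hg : ∀ d ∈ B, IsExpOf (g d) d)
    (hp : ∀ e ∈ N, p e ∈ B ∧ p e ≤ e) (F : MvPowerSeries (Fin n) K) {x : Fin n →₀ ℕ}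
    (hx : x ∈ N) :
    coeff x (F - divisionSum B g N p (divisionCoeff B g N p F)) = 0 := by
  have hne : coeff (p x) (g (p x)) ≠ 0 := (hg _ (hp x hx).1).1
  rw [map_sub, coeff_divisionSum hg hp, if_pos hx, divisionCoeff_eq B g N p F x, if_pos hx,
    div_mul_cancel₀ _ hne]
  ring

theorem exists_eq_sum_mul_add_remainder (hg : ∀ d ∈ B, IsExpOf (g d) d)
    (hN : ∀ e ∈ N, ∃ d ∈ B, d ≤ e) (F : MvPowerSeries (Fin n) K) :
    ∃ Q : (Fin n →₀ ℕ) → MvPowerSeries (Fin n) K, ∃ H : MvPowerSeries (Fin n) K,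
      (∀ e ∈ N, coeff e H = 0) ∧ F = ∑ d ∈ B, Q d * g d + H := by
  choose! p hp using hN
  exact ⟨divisionQuotient N p (divisionCoeff B g N p F),
    F - divisionSum B g N p (divisionCoeff B g N p F),
    fun e he => coeff_sub_divisionSum_divisionCoeff hg hp F he, (add_sub_cancel _ _).symm⟩

end Division

theorem eq_of_add_eq_add_of_coeff_ne_zero_notMem_diagramOf {K : Type*} [Field K] {n : ℕ}
    {I : Ideal (MvPowerSeries (Fin n) K)} {G G' H H' : MvPowerSeries (Fin n) K}
    (hG : G ∈ I) (hG' : G' ∈ I) (hH : ∀ d, coeff d H ≠ 0 → d ∉ diagramOf I)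
    (hH' : ∀ d, coeff d H' ≠ 0 → d ∉ diagramOf I) (h : G + H = G' + H') : G = G' := by
  by_contra hne
  obtain ⟨d, hd⟩ := exists_isExpOf (sub_ne_zero.2 hne)
  have hdI : d ∈ diagramOf I := ⟨G - G', I.sub_mem hG hG', sub_ne_zero.2 hne, hd⟩
  have hsub : coeff d (G - G') = coeff d H' - coeff d H := by
    rw [show G - G' = H' - H by linear_combination h, map_sub]
  have hH0 : coeff d H = 0 := not_not.1 fun h0 => hH d h0 hdI
  have hH'0 : coeff d H' = 0 := not_not.1 fun h0 => hH' d h0 hdI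
  exact hd.1 (by rw [hsub, hH0, hH'0, sub_zero])

/-- Let `I` be an ideal in `k[[y]]` with diagram `N = N(I)`, and let
`k[[y]]^N = { F : supp F ⊆ ℕ^n \ N }`.  Then `k[[y]] = I ⊕ k[[y]]^N` as `k`-vector
spaces: every `F` decomposes uniquely as a sum of an element of `I` and a series
supported outside `N(I)`. -/
theorem statement9 {K : Type*} [Field K] {n : ℕ}
    (I : Ideal (MvPowerSeries (Fin n) K)) :
    ∀ F : MvPowerSeries (Fin n) K,
      ∃! p : MvPowerSeries (Fin n) K × MvPowerSeries (Fin n) K,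
        p.1 ∈ I ∧
        (∀ d : Fin n →₀ ℕ, MvPowerSeries.coeff d p.2 ≠ 0 → d ∉ diagramOf I) ∧
        F = p.1 + p.2 := by
  intro F
  obtain ⟨B, hBI, hB⟩ := exists_finset_subset_forall_exists_le (diagramOf I)
  have hgen : ∀ d ∈ B, ∃ G ∈ I, IsExpOf G d := fun d hd =>
    let ⟨G, hGI, _, hG⟩ := hBI hd
    ⟨G, hGI, hG⟩
  choose! g hgI hg using hgen
  obtain ⟨Q, H, hH, rfl⟩ := exists_eq_sum_mul_add_remainder hg hB F
  have hQI : ∑ d ∈ B, Q d * g d ∈ I := I.sum_mem fun d hd => I.mul_mem_left _ (hgI d hd)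
  have hHN : ∀ d, coeff d H ≠ 0 → d ∉ diagramOf I := fun d hd hdI => hd (hH d hdI)
  refine ⟨(_, H), ⟨hQI, hHN, rfl⟩, ?_⟩
  rintro ⟨G', H'⟩ ⟨hG', hH', hsum⟩
  obtain rfl := eq_of_add_eq_add_of_coeff_ne_zero_notMem_diagramOf hQI hG' hHN hH' hsum
  exact Prod.ext rfl (add_left_cancel hsum).symm
end

section
/- Let I be an ideal of k[[y₁,…,y_n]]. Then the Hilbert–Samuel function H_I(k) = #{β ∈ ℕ^n \ N(I) : |β| ≤ k} agrees with a polynomial in k for all sufficiently large k. -/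
open MvPowerSeries

/-!
Multiplying a series by the monomial `y ^ c` shifts its initial exponent by `c`, because the
degree-lexicographic order is compatible with addition. Hence `N(I)` is an ideal of the monoid
`ℕ^n`, and by Dickson's lemma it is generated by a finite set `B`. By inclusion–exclusion over
`T ⊆ B`, `H_I(k)` is the alternating sum of the numbers of `β` with `|β| ≤ k` and
`β ≥ sup T`, and each of these equals `(k - |sup T| + n).choose n`, a polynomial in `k` as soon
as `k ≥ |sup B|`.
-/

open Finset

theorem degLexLt.of_add_left {n : ℕ} {c a b : Fin n →₀ ℕ}
    (h : degLexLt (c + a) (c + b)) : degLexLt a b := by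
  -- `degLexLt` compares images under the additive map `x ↦ (|x|, x)` into an ordered
  -- cancellative monoid.
  have toLex_add (x : Fin n →₀ ℕ) : toLex ((∑ i, (c + x) i : ℕ), toLex (c + x)) =
      toLex ((∑ i, c i : ℕ), toLex c) + toLex ((∑ i, x i : ℕ), toLex x) := by
    simp only [Finsupp.coe_add, Pi.add_apply, sum_add_distrib]
    rfl
  unfold degLexLt at *
  rw [toLex_add, toLex_add] at h
  exact lt_of_add_lt_add_left h

theorem IsExpOf.monomial_mul {K : Type*} [Field K] {n : ℕ} {F : MvPowerSeries (Fin n) K}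
    {d : Fin n →₀ ℕ} (h : IsExpOf F d) (c : Fin n →₀ ℕ) :
    IsExpOf (monomial c 1 * F) (c + d) := by
  refine ⟨by simpa [coeff_add_monomial_mul] using h.1, fun e he hlt => ?_⟩
  rw [coeff_monomial_mul] at he
  split_ifs at he with hce
  · obtain ⟨e, rfl⟩ := exists_add_of_le hce
    exact h.2 e (by simpa using he) hlt.of_add_left
  · exact he rfl

def diagramIdeal {K : Type*} [Field K] {n : ℕ} (I : Ideal (MvPowerSeries (Fin n) K)) :
    AddSemigroupIdeal (Fin n →₀ ℕ) where
  carrier := diagramOf I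
  vadd_mem' c := by
    rintro d ⟨F, hFI, -, hF⟩
    exact ⟨monomial c 1 * F, I.mul_mem_left _ hFI,
      fun h0 => (hF.monomial_mul c).1 (by rw [h0, map_zero]), hF.monomial_mul c⟩

theorem AddSemigroupIdeal.exists_finset_mem_iff_exists_le {M : Type*} [AddCommMonoid M]
    [PartialOrder M] [WellQuasiOrderedLE M] [CanonicallyOrderedAdd M] (J : AddSemigroupIdeal M) :
    ∃ B : Finset M, ∀ x, x ∈ J ↔ ∃ b ∈ B, b ≤ x := by
  obtain ⟨B, hB⟩ := fg_iff.1 J.fg_of_wellQuasiOrderedLE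
  refine ⟨B, fun x => ?_⟩
  rw [hB, mem_closure'']
  constructor
  · rintro ⟨y, b, hb, rfl⟩
    exact ⟨b, hb, le_add_self⟩
  · rintro ⟨b, hb, hbx⟩
    obtain ⟨y, rfl⟩ := exists_add_of_le hbx
    exact ⟨y, b, hb, add_comm y b⟩

theorem card_filter_forall_not_le {α : Type*} [SemilatticeSup α] [OrderBot α] [DecidableEq α]
    [DecidableLE α] (s B : Finset α) :
    (#{x ∈ s | ∀ b ∈ B, ¬ b ≤ x} : ℤ) =
      ∑ T ∈ B.powerset, (-1 : ℤ) ^ #T * #{x ∈ s | T.sup id ≤ x} := by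
  set S : α → Finset s := fun b => {x : s | b ≤ x.1}
  have card_filter_univ (p : α → Prop) [DecidablePred p] :
      #{x : s | p x} = #{x ∈ s | p x} := by
    rw [univ_eq_attach, filter_attach, card_map, card_attach]
  have mem_inf {T : Finset α} {f : α → Finset s} {x : s} : x ∈ T.inf f ↔ ∀ b ∈ T, x ∈ f b := by
    induction T using cons_induction <;> simp [*]
  have inf_compl : (B.inf fun b => (S b)ᶜ) = ({x : s | ∀ b ∈ B, ¬ b ≤ x} : Finset s) := by
    ext; simp [S, mem_inf]
  have inf_eq (T : Finset α) : T.inf S = ({x : s | T.sup id ≤ x} : Finset s) := by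
    ext; simp [S, mem_inf]
  calc (#{x ∈ s | ∀ b ∈ B, ¬ b ≤ x} : ℤ) = #(B.inf fun b => (S b)ᶜ) := by
        rw [inf_compl, card_filter_univ fun x => ∀ b ∈ B, ¬ b ≤ x]
    _ = ∑ T ∈ B.powerset, (-1 : ℤ) ^ #T * #(T.inf S) :=
        inclusion_exclusion_card_inf_compl _ _
    _ = ∑ T ∈ B.powerset, (-1 : ℤ) ^ #T * #{x ∈ s | T.sup id ≤ x} := by
        simp only [inf_eq, card_filter_univ]

noncomputable def degreeLE (n m : ℕ) : Finset (Fin n →₀ ℕ) :=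
  (Finsupp.finite_of_degree_le m).toFinset

@[simp]
theorem mem_degreeLE {n m : ℕ} {β : Fin n →₀ ℕ} : β ∈ degreeLE n m ↔ β.degree ≤ m :=
  Set.Finite.mem_toFinset _

theorem Finsupp.degree_cons {n : ℕ} (y : ℕ) (s : Fin n →₀ ℕ) :
    (cons y s).degree = y + s.degree := by
  simp [degree_eq_sum, Fin.sum_univ_succ]

theorem Finsupp.degree_eq_add_degree_tail {n : ℕ} (γ : Fin (n + 1) →₀ ℕ) :
    γ.degree = γ 0 + γ.tail.degree := by
  rw [← degree_cons, cons_tail]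

theorem Finset.mem_finsuppAntidiag_univ {ι μ : Type*} [Fintype ι] [DecidableEq ι]
    [AddCommMonoid μ] [HasAntidiagonal μ] [DecidableEq μ] {m : μ} {γ : ι →₀ μ} :
    γ ∈ (univ : Finset ι).finsuppAntidiag m ↔ γ.degree = m := by
  simp [Finsupp.degree_eq_sum]

theorem card_degreeLE (n m : ℕ) : #(degreeLE n m) = (m + n).choose n := by
  -- `β ↦ (m - |β|, β)` adds a slack coordinate, making the degree exactly `m`.
  have slack : #(degreeLE n m) = #((univ : Finset (Fin (n + 1))).finsuppAntidiag m) := by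
    refine card_nbij' (fun β => Finsupp.cons (m - β.degree) β) Finsupp.tail ?_ ?_ ?_ ?_
    · intro β hβ
      simp_all [← Finsupp.degree_eq_sum, Finsupp.degree_cons]
    · intro γ hγ
      simp only [mem_coe, mem_finsuppAntidiag_univ, mem_degreeLE] at hγ ⊢
      rw [Finsupp.degree_eq_add_degree_tail] at hγ
      omega
    · intro β _
      exact Finsupp.tail_cons _ _
    · intro γ hγ
      simp only [mem_coe, mem_finsuppAntidiag_univ] at hγ
      rw [Finsupp.degree_eq_add_degree_tail] at hγ
      simp only [← hγ, Nat.add_sub_cancel, Finsupp.cons_tail]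
  rw [slack, card_finsuppAntidiag_nat_eq_choose, card_univ, Fintype.card_fin,
    add_right_comm, Nat.add_sub_cancel, add_comm n m, Nat.choose_symm_add]

theorem card_filter_le_degreeLE {n k : ℕ} {a : Fin n →₀ ℕ} (ha : a.degree ≤ k) :
    #{β ∈ degreeLE n k | a ≤ β} = #(degreeLE n (k - a.degree)) := by
  refine card_nbij' (· - a) (a + ·) ?_ ?_ ?_ ?_
  · intro β hβ
    simp only [coe_filter, Set.mem_ofPred_eq, mem_degreeLE, mem_coe] at hβ ⊢
    obtain ⟨hβk, γ, rfl⟩ := hβ.imp_right exists_add_of_le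
    simp only [map_add, add_tsub_cancel_left] at hβk ⊢
    omega
  · intro γ hγ
    simp only [coe_filter, Set.mem_ofPred_eq, mem_degreeLE, mem_coe, map_add] at hγ ⊢
    exact ⟨by omega, le_self_add⟩
  · intro β hβ
    simp only [coe_filter, Set.mem_ofPred_eq] at hβ
    exact add_tsub_cancel_of_le hβ.2
  · intro γ _
    exact add_tsub_cancel_left a γ

theorem eval_preHilbertPoly_eq_card_filter_le {n k : ℕ} {a : Fin n →₀ ℕ} (ha : a.degree ≤ k) :
    (Polynomial.preHilbertPoly ℚ n a.degree).eval (k : ℚ) = #{β ∈ degreeLE n k | a ≤ β} := by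
  rw [Polynomial.preHilbertPoly_eq_choose_sub_add ℚ n ha, card_filter_le_degreeLE ha,
    card_degreeLE]

theorem card_filter_degreeLE_forall_not_le_eq_eval {n : ℕ} (B : Finset (Fin n →₀ ℕ)) {k : ℕ}
    (hk : (B.sup id).degree ≤ k) :
    (#{β ∈ degreeLE n k | ∀ b ∈ B, ¬ b ≤ β} : ℚ) =
      (∑ T ∈ B.powerset, (-1 : ℚ) ^ #T • Polynomial.preHilbertPoly ℚ n (T.sup id).degree).eval
        (k : ℚ) := by
  have hT : ∀ T ∈ B.powerset, (T.sup id).degree ≤ k := fun T hT =>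
    (Finsupp.degree_mono (sup_mono (mem_powerset.1 hT))).trans hk
  rw [← Int.cast_natCast, card_filter_forall_not_le, Polynomial.eval_finsetSum]
  push_cast
  refine sum_congr rfl fun T hT' => ?_
  rw [Polynomial.eval_smul, eval_preHilbertPoly_eq_card_filter_le (hT T hT'), smul_eq_mul]

/-- Let `I` be an ideal of `k[[y₁,…,y_n]]`.  Then the Hilbert–Samuel
function `H_I(k) = #{β ∈ ℕ^n \ N(I) : |β| ≤ k}` agrees with a polynomial in `k` for all
sufficiently large `k`. -/
theorem statement11 {K : Type*} [Field K] {n : ℕ}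
    (I : Ideal (MvPowerSeries (Fin n) K)) :
    ∃ P : Polynomial ℚ, ∃ k₀ : ℕ, ∀ k ≥ k₀,
      (Set.ncard {β : Fin n →₀ ℕ | β ∉ diagramOf I ∧ (∑ i, β i) ≤ k} : ℚ) =
        P.eval (k : ℚ) := by
  obtain ⟨B, hB⟩ : ∃ B : Finset (Fin n →₀ ℕ), ∀ β, β ∈ diagramOf I ↔ ∃ b ∈ B, b ≤ β :=
    (diagramIdeal I).exists_finset_mem_iff_exists_le
  refine ⟨∑ T ∈ B.powerset, (-1 : ℚ) ^ #T • Polynomial.preHilbertPoly ℚ n (T.sup id).degree,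
    (B.sup id).degree, fun k hk => ?_⟩
  have hset : {β : Fin n →₀ ℕ | β ∉ diagramOf I ∧ (∑ i, β i) ≤ k} =
      ↑{β ∈ degreeLE n k | ∀ b ∈ B, ¬ b ≤ β} := by
    ext β
    simp only [Set.mem_ofPred_eq, coe_filter, mem_degreeLE, Finsupp.degree_eq_sum, hB]
    grind
  rw [hset, Set.ncard_coe_finset, card_filter_degreeLE_forall_not_le_eq_eval B hk]
end

section
/- Let R = k[[x₁,…,x_m, u₁,…,u_m]] and let φ₁,…,φ_n ∈ k[[x]]. Suppose G ∈ k[[v₁,…,v_n]] satisfies G(φ(x+u)) = 0 in k[[x,u]] (composition with the series φ_i(x+u) − φ_i(0), assuming φ_i(0)=0). Then G(φ(x+u) − φ(x)) belongs to the ideal of k[[x,u]] generated by φ₁(x),…,φ_n(x). -/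
open MvPowerSeries Classical

noncomputable section

/-- The series `F(x + u) ∈ k[[x, u]]` obtained from `F ∈ k[[x]]` by the substitution
`x_i ↦ x_i + u_i`: its coefficient on `x^a u^b` is `(∏ i, C(a_i + b_i, b_i)) · F_{a+b}`
(the `x`-variables are indexed by `Sum.inl`, the `u`-variables by `Sum.inr`). -/
def shiftAdd {K : Type*} [Field K] {m : ℕ} (F : MvPowerSeries (Fin m) K) :
    MvPowerSeries (Fin m ⊕ Fin m) K :=
  fun e =>
    (∏ i : Fin m, Nat.choose (e (Sum.inl i) + e (Sum.inr i)) (e (Sum.inr i))) •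
      F (Finsupp.equivFunOnFinite.symm fun i => e (Sum.inl i) + e (Sum.inr i))

/-- The series `F(x) ∈ k[[x, u]]` obtained from `F ∈ k[[x]]` by regarding it as a series
in the `x`-variables only. -/
def onX {K : Type*} [Field K] {m : ℕ} (F : MvPowerSeries (Fin m) K) :
    MvPowerSeries (Fin m ⊕ Fin m) K :=
  fun e =>
    if ∀ i : Fin m, e (Sum.inr i) = 0 then
      F (Finsupp.equivFunOnFinite.symm fun i => e (Sum.inl i))
    else 0

/-- Composition `G(ψ₁, …, ψ_n)` of a formal power series `G ∈ k[[v₁,…,v_n]]` with power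
series `ψ_i` having zero constant term: the coefficient of `G ∘ ψ` on a monomial of total
degree `N` only involves the terms `G_γ ψ^γ` with each `γ_i ≤ N`, so it is given by the
corresponding finite sum. -/
def compPS {K : Type*} [Field K] {n : ℕ} {σ : Type*} [Fintype σ] [DecidableEq σ]
    (G : MvPowerSeries (Fin n) K) (ψ : Fin n → MvPowerSeries σ K) :
    MvPowerSeries σ K :=
  fun d =>
    MvPowerSeries.coeff d
      (∑ γ ∈ Finset.Iic (Finsupp.equivFunOnFinite.symm fun _ : Fin n => (∑ j, d j : ℕ)),
        MvPowerSeries.coeff γ G • ∏ i : Fin n, ψ i ^ γ i)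

end

/-!
Write `ψ = φ(x + u)`, `χ = φ(x)` and `ψ' = ψ - χ`. In `k[[y, v]]` the series `G(y + v) - G(y)`
vanishes at `v = 0`, so it lies in the ideal `(v₁, …, vₙ)`: an ideal generated by finitely many
variables contains every series all of whose coefficients on monomials free of these variables
vanish. The substitution `y ↦ ψ'`, `v ↦ χ` is a ring homomorphism; it maps `G(y + v) - G(y)` to
`G(ψ) - G(ψ') = -G(ψ')`, which therefore lies in the ideal `(χ₁, …, χₙ)`.
-/

namespace MvPowerSeries

variable {R : Type*} [CommRing R]

theorem degree_le_of_coeff_prod_pow_ne_zero {ι σ : Type*} {a : ι → MvPowerSeries σ R}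
    (ha : ∀ i, constantCoeff (a i) = 0) {γ : ι →₀ ℕ} {d : σ →₀ ℕ}
    (h : coeff d (γ.prod fun i k => a i ^ k) ≠ 0) : γ.degree ≤ d.degree := by
  contrapose! h
  rw [Finsupp.prod]
  refine coeff_of_lt_order (lt_of_lt_of_le (Nat.cast_lt.mpr h)
    (.trans ?_ (le_order_prod _ γ.support)))
  exact_mod_cast Finset.sum_le_sum fun i _ => le_order_pow_of_constantCoeff_eq_zero _ (ha i)

theorem mem_span_X_image_of_coeff_eq_zero {σ : Type*} (s : Finset σ)
    {F : MvPowerSeries σ R} (hF : ∀ e : σ →₀ ℕ, (∀ i ∈ s, e i = 0) → coeff e F = 0) :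
    F ∈ Ideal.span (X '' (s : Set σ)) := by
  induction s using Finset.induction_on generalizing F with
  | empty => simp_all [MvPowerSeries.ext_iff]
  | insert j s hj ih =>
    let F₀ : MvPowerSeries σ R := fun e => if e j = 0 then coeff e F else 0
    have hdvd : X j ∣ F - F₀ := X_dvd_iff.mpr fun e he => by
      rw [map_sub]
      exact sub_eq_zero.mpr (if_pos he).symm
    have hF₀ : F₀ ∈ Ideal.span (X '' (s : Set σ)) := ih fun e he => by
      show ite _ _ _ = 0
      split_ifs with hej
      · exact hF e ((Finset.forall_mem_insert _ _ _).2 ⟨hej, he⟩)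
      · rfl
    obtain ⟨Q, hQ⟩ := hdvd
    rw [← sub_add_cancel F F₀, hQ, Finset.coe_insert, Set.image_insert_eq]
    exact Ideal.add_mem _ (Ideal.mul_mem_right _ _ (Ideal.subset_span (Set.mem_insert _ _)))
      (Ideal.span_mono (Set.subset_insert _ _) hF₀)

theorem coeff_subst_elim_X_zero {σ τ : Type*} [Finite σ] [Finite τ]
    (F : MvPowerSeries (σ ⊕ τ) R) {e : σ ⊕ τ →₀ ℕ} (he : ∀ j, e (Sum.inr j) = 0) :
    coeff e (subst (Sum.elim (fun i => X (Sum.inl i)) 0) F) = coeff e F := by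
  set a : σ ⊕ τ → MvPowerSeries (σ ⊕ τ) R := Sum.elim (fun i => X (Sum.inl i)) 0
  have ha : HasSubst a := hasSubst_of_constantCoeff_zero (by rintro (i | j) <;> simp [a])
  have hmonomial (d : σ ⊕ τ →₀ ℕ) (hd : ∀ j, d (Sum.inr j) = 0) :
      (d.prod fun s k => a s ^ k) = monomial d 1 := by
    rw [monomial_one_eq]
    refine Finsupp.prod_congr fun s hs => ?_
    cases s with
    | inl i => rfl
    | inr j => exact absurd (hd j) (Finsupp.mem_support_iff.mp hs)
  have hvanish (d : σ ⊕ τ →₀ ℕ) (hde : d ≠ e) : coeff e (d.prod fun s k => a s ^ k) = 0 := by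
    by_cases hd : ∀ j, d (Sum.inr j) = 0
    · rw [hmonomial d hd, coeff_monomial, if_neg hde.symm]
    · obtain ⟨j, hj⟩ := not_forall.mp hd
      rw [Finsupp.prod, Finset.prod_eq_zero (Finsupp.mem_support_iff.mpr hj)
        (by simp [a, zero_pow hj]), map_zero]
  rw [coeff_subst ha, finsum_eq_single _ e fun d hd => by rw [hvanish d hd, smul_zero],
    hmonomial e he, coeff_monomial_same, smul_eq_mul, mul_one]

theorem sub_subst_elim_X_zero_mem_span {σ τ : Type*} [Finite σ] [Fintype τ]
    (F : MvPowerSeries (σ ⊕ τ) R) :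
    F - subst (Sum.elim (fun i => X (Sum.inl i)) 0) F ∈
      Ideal.span (Set.range fun j => X (Sum.inr j)) := by
  have := mem_span_X_image_of_coeff_eq_zero (Finset.univ.map Function.Embedding.inr)
    (F := F - subst (Sum.elim (fun i => X (Sum.inl i)) 0) F) fun e he => by
      rw [map_sub, coeff_subst_elim_X_zero F (by simpa using he), sub_self]
  simpa [← Set.range_comp, Function.comp_def] using this

theorem subst_add_sub_subst_mem_span {S : Type*} [CommRing S] [Algebra R S]
    {ι τ : Type*} [Fintype ι] {a b : ι → MvPowerSeries τ S} (ha : HasSubst a)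
    (hb : HasSubst b) (f : MvPowerSeries ι R) :
    subst (a + b) f - subst a f ∈ Ideal.span (Set.range b) := by
  set y : ι → MvPowerSeries (ι ⊕ ι) R := fun i => X (Sum.inl i)
  set v : ι → MvPowerSeries (ι ⊕ ι) R := fun i => X (Sum.inr i)
  have hy : HasSubst y := hasSubst_of_constantCoeff_zero (by simp [y])
  have hyv : HasSubst (y + v) := hasSubst_of_constantCoeff_zero (by simp [y, v])
  have hy0 : HasSubst (Sum.elim y 0 : ι ⊕ ι → MvPowerSeries (ι ⊕ ι) R) :=
    hasSubst_of_constantCoeff_zero (by rintro (i | i) <;> simp [y])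
  have hab : HasSubst (Sum.elim a b : ι ⊕ ι → MvPowerSeries τ S) :=
    hasSubst_of_constantCoeff_nilpotent
      (by rintro (i | i); exacts [ha.const_coeff i, hb.const_coeff i])
  set F := subst (y + v) f
  have hF0 : subst (Sum.elim y 0) F = subst y f := by
    rw [subst_comp_subst_apply hyv hy0]
    congr 1
    ext1 i
    simp [y, v, subst_add hy0, subst_X hy0]
  have hFab : subst (Sum.elim a b) F = subst (a + b) f := by
    rw [subst_comp_subst_apply hyv hab]
    congr 1
    ext1 i
    simp [y, v, subst_add hab, subst_X hab]
  have hyab : subst (Sum.elim a b) (subst y f) = subst a f := by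
    rw [subst_comp_subst_apply hy hab]
    congr 1
    ext1 i
    simp [y, subst_X hab]
  have hmem := Ideal.mem_map_of_mem (substAlgHom hab) (sub_subst_elim_X_zero_mem_span F)
  rw [Ideal.map_span, ← Set.range_comp, map_sub, substAlgHom_apply, substAlgHom_apply, hF0,
    hFab, hyab] at hmem
  convert hmem using 3
  ext1 i
  simp [subst_X hab]

end MvPowerSeries

theorem compPS_eq_subst {K : Type*} [Field K] {n : ℕ} {σ : Type*} [Fintype σ] [DecidableEq σ]
    (G : MvPowerSeries (Fin n) K) {ψ : Fin n → MvPowerSeries σ K}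
    (hψ : ∀ i, constantCoeff (ψ i) = 0) : compPS G ψ = subst ψ G := by
  ext d
  set N : Fin n →₀ ℕ := Finsupp.equivFunOnFinite.symm fun _ => ∑ j, d j
  have hsupp : Function.support (fun γ => coeff γ G • coeff d (γ.prod fun i k => ψ i ^ k)) ⊆
      Finset.Iic N := fun γ hγ => Finset.mem_Iic.mpr fun i =>
    (Finsupp.le_degree i γ).trans <| (degree_le_of_coeff_prod_pow_ne_zero hψ
      (right_ne_zero_of_smul hγ)).trans (Finsupp.degree_eq_sum d).le
  rw [coeff_subst (hasSubst_of_constantCoeff_zero hψ), finsum_eq_sum_of_support_subset _ hsupp]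
  show coeff d (∑ γ ∈ Finset.Iic N, _) = _
  simp [map_sum, Finsupp.prod_fintype]

theorem constantCoeff_shiftAdd {K : Type*} [Field K] {m : ℕ} (F : MvPowerSeries (Fin m) K) :
    constantCoeff (shiftAdd F) = constantCoeff F := by
  rw [← coeff_zero_eq_constantCoeff_apply, ← coeff_zero_eq_constantCoeff_apply]
  show shiftAdd F 0 = F 0
  simp only [shiftAdd, Finsupp.coe_zero, Pi.zero_apply, add_zero, Nat.choose_zero_right,
    Finset.prod_const_one, one_smul]
  exact congrArg F (Finsupp.equivFunOnFinite_symm_coe 0)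

theorem constantCoeff_onX {K : Type*} [Field K] {m : ℕ} (F : MvPowerSeries (Fin m) K) :
    constantCoeff (onX F) = constantCoeff F := by
  rw [← coeff_zero_eq_constantCoeff_apply, ← coeff_zero_eq_constantCoeff_apply]
  show onX F 0 = F 0
  simp only [onX, Finsupp.coe_zero, Pi.zero_apply, implies_true, if_true]
  exact congrArg F (Finsupp.equivFunOnFinite_symm_coe 0)

/-- Let `φ₁,…,φ_n ∈ k[[x₁,…,x_m]]` have zero constant term and let
`G ∈ k[[v₁,…,v_n]]` satisfy `G(φ(x+u)) = 0` in `k[[x,u]]`.  Then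
`G(φ(x+u) − φ(x))` belongs to the ideal of `k[[x,u]]` generated by
`φ₁(x),…,φ_n(x)`. -/
theorem statement17 {K : Type*} [Field K] {n m : ℕ}
    (φ : Fin n → MvPowerSeries (Fin m) K)
    (hφ0 : ∀ i, MvPowerSeries.constantCoeff (φ i) = 0)
    (G : MvPowerSeries (Fin n) K)
    (hG : compPS G (fun i => shiftAdd (φ i)) = 0) :
    compPS G (fun i => shiftAdd (φ i) - onX (φ i)) ∈
      Ideal.span (Set.range fun i => onX (φ i)) := by
  have hψ (i : Fin n) : constantCoeff (shiftAdd (φ i)) = 0 :=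
    (constantCoeff_shiftAdd _).trans (hφ0 i)
  have hχ (i : Fin n) : constantCoeff (onX (φ i)) = 0 := (constantCoeff_onX _).trans (hφ0 i)
  have hψχ (i : Fin n) : constantCoeff (shiftAdd (φ i) - onX (φ i)) = 0 := by
    rw [map_sub, hψ, hχ, sub_zero]
  have key := subst_add_sub_subst_mem_span (hasSubst_of_constantCoeff_zero hψχ)
    (hasSubst_of_constantCoeff_zero hχ) G
  rw [compPS_eq_subst G hψ] at hG
  rw [compPS_eq_subst G hψχ, ← neg_mem_iff, ← zero_sub, ← hG]
  convert key using 3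
  ext1 i
  exact (sub_add_cancel _ _).symm
end
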